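/- A set of transpositions in the symmetric group on a finite type α generates the full symmetric group if and only if the graph on α whose edges are the supports of the transpositions is connected. -/

import Mathlib

/-!
Permutations that move every vertex within its connected component form a subgroup containing
the swap along each edge, so if the swaps generate everything, `swap a b` moves `a` to a vertex
reachable from it, namely `b`. Conversely `swap a c` is a product of `swap a b` and `swap b c`,
so following a path gives `swap a b ∈ closure S` for all reachable `a, b`, and the transpositions
generate `Perm α`.
-/

open Equiv

namespace SimpleGraph

variable {α : Type*} (G : SimpleGraph α)

def componentPerms : Subgroup (Perm α) where
  carrier := {σ | ∀ a, G.Reachable a (σ a)}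
  one_mem' := Reachable.refl
  mul_mem' hσ hτ a := (hτ a).trans (hσ _)
  inv_mem' {σ} hσ a := by simpa using (hσ (σ⁻¹ a)).symm

variable {G} [DecidableEq α]

theorem swap_mem_componentPerms {a b : α} (hab : G.Reachable a b) :
    swap a b ∈ G.componentPerms := by
  intro c
  rcases eq_or_ne c a with rfl | hca
  · simpa using hab
  rcases eq_or_ne c b with rfl | hcb
  · simpa using hab.symm
  · simp [swap_apply_of_ne_of_ne hca hcb]

theorem swap_mem_of_reachable {C : Type*} [SetLike C (Perm α)] [SubmonoidClass C (Perm α)]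
    {M : C} (hM : ∀ a b, G.Adj a b → swap a b ∈ M) {a b : α} (hab : G.Reachable a b) :
    swap a b ∈ M := by
  rw [reachable_iff_reflTransGen] at hab
  induction hab with
  | refl => exact swap_self a ▸ one_mem M
  | tail _ hbc ih => exact SubmonoidClass.swap_mem_trans M ih (hM _ _ hbc)

end SimpleGraph

/-- A set of transpositions generates the full symmetric group on a finite type α
(with at least two elements) iff the graph whose edges are the supports of the
transpositions is connected. -/
theorem swaps_generate_iff_connected {α : Type*} [Fintype α] [DecidableEq α]
    (hcard : 2 ≤ Fintype.card α) (S : Set (Equiv.Perm α))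
    (hswap : ∀ σ ∈ S, Equiv.Perm.IsSwap σ)
    (G : SimpleGraph α)
    (hG : ∀ a b, G.Adj a b ↔ a ≠ b ∧ Equiv.swap a b ∈ S) :
    Subgroup.closure S = ⊤ ↔ G.Connected := by
  constructor
  · intro htop
    have hS : Subgroup.closure S ≤ G.componentPerms := by
      refine (Subgroup.closure_le _).mpr fun σ hσ => ?_
      obtain ⟨x, y, hxy, rfl⟩ := hswap σ hσ
      exact SimpleGraph.swap_mem_componentPerms ((hG x y).mpr ⟨hxy, hσ⟩).reachable
    have : Nonempty α := Fintype.card_pos_iff.mp (by omega)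
    exact ⟨fun a b => swap_apply_left a b ▸ hS (htop ▸ Subgroup.mem_top (swap a b)) a⟩
  · intro hconn
    rw [eq_top_iff, ← Perm.closure_isSwap, Subgroup.closure_le]
    rintro _ ⟨x, y, -, rfl⟩
    exact SimpleGraph.swap_mem_of_reachable
      (fun a b hab => Subgroup.subset_closure ((hG a b).mp hab).2) (hconn x y)
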